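/- In Nim on graphs played on an even cycle C_{2n} in which every edge has weight 2, the second player has a winning strategy: whenever the first player reduces an edge to weight 1 and crosses it, the second player continues forward around the cycle reducing the next edge to weight 1; and the first player cannot profitably reduce an edge to 0, since that leaves the second player at the endpoint of an odd-length path. -/

import Mathlib

/-- A position of Nim on graphs: a symmetric non-negative integer weight
function on pairs of vertices (the weighted graph; weight-zero pairs are
non-edges) plus the location of the indicator piece. -/
structure NimPos (V : Type) where
  w : V → V → ℕ
  symm : ∀ u v, w u v = w v u
  pos : V

/-- A legal move: decrease the weight of an edge incident with the piece to a
strictly smaller value and move the piece along it; all other weights stay. -/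
def NimMove {V : Type} (p q : NimPos V) : Prop :=
  p.pos ≠ q.pos ∧
  q.w p.pos q.pos < p.w p.pos q.pos ∧
  ∀ u v, ¬((u = p.pos ∧ v = q.pos) ∨ (u = q.pos ∧ v = p.pos)) → q.w u v = p.w u v

/-- The player to move loses (the position is a 0-position): the opponent has
a winning strategy `f` answering every move. -/
inductive MoverLoses {V : Type} : NimPos V → Prop
  | intro (p : NimPos V) (f : ∀ q, NimMove p q → NimPos V)
      (hmove : ∀ q (h : NimMove p q), NimMove q (f q h))
      (hwin : ∀ q (h : NimMove p q), MoverLoses (f q h)) : MoverLoses p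

/-- The player to move wins (the position is a p-position). -/
def MoverWins {V : Type} (p : NimPos V) : Prop :=
  ∃ q, NimMove p q ∧ MoverLoses q

/-- Weights of the path on vertices `0,…,n` of `Fin (n+1)`: edge `i — i+1` has weight `ω i`. -/
def pathW (n : ℕ) (ω : ℕ → ℕ) (u v : Fin (n+1)) : ℕ :=
  if u.val + 1 = v.val then ω u.val
  else if v.val + 1 = u.val then ω v.val else 0

theorem pathW_symm (n : ℕ) (ω : ℕ → ℕ) : ∀ u v, pathW n ω u v = pathW n ω v u := by
  intro u v; unfold pathW; split_ifs <;> first | rfl | (exfalso; omega)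

/-- Weights of the cycle on `Fin m` (`m ≥ 3`): edge `i — (i+1) % m` has weight `ω i`. -/
def cycW (m : ℕ) (ω : ℕ → ℕ) (u v : Fin m) : ℕ :=
  (if (u.val + 1) % m = v.val then ω u.val else 0) +
  (if (v.val + 1) % m = u.val then ω v.val else 0)

theorem cycW_symm (m : ℕ) (ω : ℕ → ℕ) : ∀ u v, cycW m ω u v = cycW m ω v u :=
  fun _ _ => Nat.add_comm _ _

/-- Weight-1 complete bipartite graph `K_{2,j}`: part `{0,1}` and part `{2,…,j+1}`. -/
def k2W (j : ℕ) (u v : Fin (j+2)) : ℕ :=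
  if (u.val < 2 ∧ 2 ≤ v.val) ∨ (v.val < 2 ∧ 2 ≤ u.val) then 1 else 0

theorem k2W_symm (j : ℕ) : ∀ u v, k2W j u v = k2W j v u := by
  intro u v; unfold k2W; split_ifs <;> omega

/-- Weight-1 `SSB_j = K_{2,j} + e_{12}`: `K_{2,j}` plus the edge `0 — 1`. -/
def ssbW (j : ℕ) (u v : Fin (j+2)) : ℕ :=
  if ((u.val < 2 ∧ 2 ≤ v.val) ∨ (v.val < 2 ∧ 2 ≤ u.val)) ∨
      (u.val < 2 ∧ v.val < 2 ∧ u.val ≠ v.val) then 1 else 0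

theorem ssbW_symm (j : ℕ) : ∀ u v, ssbW j u v = ssbW j v u := by
  intro u v; unfold ssbW; split_ifs <;> omega

/-- Weight-1 complete graph `K_n`. -/
def knW (n : ℕ) (u v : Fin n) : ℕ := if u.val ≠ v.val then 1 else 0

theorem knW_symm (n : ℕ) : ∀ u v, knW n u v = knW n v u := by
  intro u v; unfold knW; split_ifs <;> omega

/-- Length of the maximal all-positive run of cycle edges clockwise from vertex `s`. -/
noncomputable def fwdLen (m : ℕ) (w : ℕ → ℕ) (s : ℕ) : ℕ :=
  sSup {d | d ≤ m ∧ ∀ i < d, 0 < w ((s + i) % m)}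

/-- Length of the maximal all-positive run of cycle edges counterclockwise from vertex `s`. -/
noncomputable def bwdLen (m : ℕ) (w : ℕ → ℕ) (s : ℕ) : ℕ :=
  sSup {d | d ≤ m ∧ ∀ i < d, 0 < w ((s + m - 1 - i) % m)}

/-!
The second player keeps walking in the direction of the first player's move: a reduction to 0
is answered by reducing the next edge to 0, a reduction to 1 by reducing the next edge to 1, and
once some edge has weight 0 every answer reduces the next edge to 0. Read from the piece around
the cycle, the weights then always form one of the words `2…21…1` with an even number of 1s,
or an even run of positive weights followed by a 0 with a 0 also on the edge behind the piece
(the piece ends a path of even length), or the reverse of one of these. Such a word is restored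
by every move followed by its answer; since the total weight drops, the first player is the one
who runs out of moves.
-/

namespace NimPos

variable {V : Type}

def moveAlong [DecidableEq V] (p : NimPos V) (v : V) (c : ℕ) : NimPos V where
  w x y := if s(x, y) = s(p.pos, v) then c else p.w x y
  symm x y := by rw [Sym2.eq_swap, p.symm]
  pos := v

@[simp]
theorem moveAlong_pos [DecidableEq V] (p : NimPos V) (v : V) (c : ℕ) :
    (p.moveAlong v c).pos = v :=
  rfl

@[simp]
theorem moveAlong_w_pos [DecidableEq V] (p : NimPos V) (v : V) (c : ℕ) :
    (p.moveAlong v c).w p.pos v = c := by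
  simp [moveAlong]

def totalWeight [Fintype V] (p : NimPos V) : ℕ := ∑ x : V × V, p.w x.1 x.2

end NimPos

section General

variable {V : Type} {p q : NimPos V}

theorem nimMove_moveAlong [DecidableEq V] {v : V} {c : ℕ} (hv : p.pos ≠ v)
    (hc : c < p.w p.pos v) : NimMove p (p.moveAlong v c) :=
  ⟨hv, by simpa using hc, fun _ _ hxy => if_neg (Sym2.eq_iff.not.mpr hxy)⟩

theorem NimMove.eq_moveAlong [DecidableEq V] (h : NimMove p q) :
    q = p.moveAlong q.pos (q.w p.pos q.pos) := by
  obtain ⟨w, symm, pos⟩ := q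
  simp only [NimPos.moveAlong, NimPos.mk.injEq, and_true]
  funext x y
  split_ifs with hxy
  · rcases Sym2.eq_iff.mp hxy with ⟨rfl, rfl⟩ | ⟨rfl, rfl⟩
    · rfl
    · exact symm _ _
  · exact h.2.2 x y (Sym2.eq_iff.not.mp hxy)

theorem NimMove.w_le (h : NimMove p q) (x y : V) : q.w x y ≤ p.w x y := by
  by_cases hxy : (x = p.pos ∧ y = q.pos) ∨ (x = q.pos ∧ y = p.pos)
  · rcases hxy with ⟨rfl, rfl⟩ | ⟨rfl, rfl⟩
    · exact h.2.1.le
    · rw [q.symm, p.symm]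
      exact h.2.1.le
  · exact (h.2.2 x y hxy).le

theorem NimMove.totalWeight_lt [Fintype V] (h : NimMove p q) :
    q.totalWeight < p.totalWeight :=
  Finset.sum_lt_sum (fun x _ => h.w_le x.1 x.2) ⟨(p.pos, q.pos), Finset.mem_univ _, h.2.1⟩

theorem MoverLoses.of_forall_exists (h : ∀ q, NimMove p q → ∃ r, NimMove q r ∧ MoverLoses r) :
    MoverLoses p := by
  choose f hmove hwin using h
  exact .intro p f hmove hwin

theorem MoverLoses.of_invariant [Fintype V] (P : NimPos V → Prop)
    (hP : ∀ p q, P p → NimMove p q → ∃ r, NimMove q r ∧ P r) (hp : P p) : MoverLoses p := by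
  induction hw : p.totalWeight using Nat.strong_induction_on generalizing p with
  | _ n ih =>
    refine .of_forall_exists fun q hq => ?_
    obtain ⟨r, hr, hPr⟩ := hP p q hp hq
    exact ⟨r, hr, ih _ (hw ▸ hr.totalWeight_lt.trans hq.totalWeight_lt) hPr rfl⟩

end General

section Words

open List

def EvenRunThenZero (a : List ℕ) : Prop :=
  ∃ F M : List ℕ, (∀ x ∈ F, 0 < x) ∧ Even F.length ∧ a = F ++ 0 :: M ++ [0]

def TwosThenOnes (a : List ℕ) : Prop :=
  ∃ i j : ℕ, Even j ∧ a = replicate i 2 ++ replicate j 1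

def LosingWord (a : List ℕ) : Prop :=
  EvenRunThenZero a ∨ TwosThenOnes a ∨ EvenRunThenZero a.reverse ∨ TwosThenOnes a.reverse

variable {x y c : ℕ} {rest : List ℕ}

theorem losingWord_reverse_iff {a : List ℕ} : LosingWord a.reverse ↔ LosingWord a := by
  simp only [LosingWord, reverse_reverse]
  tauto

theorem evenRunThenZero_append_zero_zero {F : List ℕ} (hF : ∀ x ∈ F, 0 < x)
    (he : Even F.length) : EvenRunThenZero (F ++ [0, 0]) :=
  ⟨F, [], hF, he, by simp⟩

theorem TwosThenOnes.pos {a : List ℕ} (h : TwosThenOnes a) : ∀ z ∈ a, 0 < z := by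
  obtain ⟨i, j, -, rfl⟩ := h
  intro z hz
  rcases mem_append.mp hz with hz | hz <;> simp [eq_of_mem_replicate hz]

theorem EvenRunThenZero.reply (h : EvenRunThenZero (x :: y :: rest)) (hc : c < x) :
    0 < y ∧ EvenRunThenZero (rest ++ [c, 0]) := by
  obtain ⟨F, M, hF, he, hw⟩ := h
  match F, hF, he, hw with
  | [], _, _, hw => simp only [nil_append, cons_append, cons.injEq] at hw; omega
  | [_], _, he, _ => simp at he
  | x' :: y' :: F', hF, he, hw =>
    simp only [cons_append, cons.injEq] at hw
    obtain ⟨rfl, rfl, rfl⟩ := hw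
    refine ⟨hF y (by simp), F', M ++ [0, c], fun z hz => hF z (by simp [hz]), ?_, by simp⟩
    simpa [Nat.even_add_one] using he

theorem TwosThenOnes.reply (h : TwosThenOnes (x :: y :: rest)) (hev : Even rest.length)
    (hc : 0 < c) (hcx : c < x) : c = 1 ∧ 1 < y ∧ TwosThenOnes (rest ++ [1, 1]) := by
  obtain ⟨i, j, hj, hw⟩ := h
  have hlen := congrArg length hw
  simp only [length_cons, length_append, length_replicate] at hlen
  match i, hw with
  | 0, hw =>
    cases j with
    | zero => simp at hw
    | succ j => simp only [replicate_zero, replicate_succ, nil_append, cons.injEq] at hw; omega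
  | 1, _ => rw [Nat.even_iff] at hev hj; omega
  | i + 2, hw =>
    simp only [replicate_succ, cons_append, cons.injEq] at hw
    obtain ⟨rfl, rfl, rfl⟩ := hw
    refine ⟨by omega, by omega, i, j + 2, by simpa [Nat.even_add] using hj, ?_⟩
    simp [replicate_succ']

theorem LosingWord.exists_reply (h : LosingWord (x :: y :: rest)) (hev : Even rest.length)
    (hc : c < x) : ∃ d < y, LosingWord (rest ++ [c, d]) := by
  have of_pos : (∀ z ∈ x :: y :: rest, 0 < z) → c = 0 →
      ∃ d < y, LosingWord (rest ++ [c, d]) := by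
    rintro hpos rfl
    exact ⟨0, hpos y (by simp),
      Or.inl (evenRunThenZero_append_zero_zero (fun z hz => hpos z (by simp [hz])) hev)⟩
  have of_twos : TwosThenOnes (x :: y :: rest) → ∃ d < y, LosingWord (rest ++ [c, d]) := by
    intro h
    rcases Nat.eq_zero_or_pos c with hc0 | hc0
    · exact of_pos h.pos hc0
    · obtain ⟨rfl, hy, h'⟩ := h.reply hev hc0 hc
      exact ⟨1, hy, Or.inr (Or.inl h')⟩
  rcases h with h | h | h | h
  · obtain ⟨hy, h'⟩ := h.reply hc
    exact ⟨0, hy, Or.inl h'⟩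
  · exact of_twos h
  · obtain ⟨F, M, -, -, hw⟩ := h
    rw [← reverse_inj, reverse_reverse, reverse_append] at hw
    obtain ⟨rfl, -⟩ := cons.inj hw
    omega
  · rcases Nat.eq_zero_or_pos c with hc0 | hc0
    · exact of_pos (fun z hz => h.pos z (mem_reverse.mpr hz)) hc0
    · obtain ⟨i, j, hj, hw⟩ := h
      rw [← reverse_inj, reverse_append, reverse_replicate, reverse_replicate,
        reverse_reverse] at hw
      cases j with
      | zero => exact of_twos ⟨i, 0, Even.zero, by simpa using hw⟩
      | succ j => simp only [replicate_succ, cons_append, cons.injEq] at hw; omega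

theorem losingWord_replicate_two_append {k c : ℕ} (hk : Even k) (hc : c ≤ 1) :
    LosingWord (replicate k 2 ++ [c, c]) := by
  rcases Nat.le_one_iff_eq_zero_or_eq_one.mp hc with rfl | rfl
  · exact Or.inl (evenRunThenZero_append_zero_zero (by simp [mem_replicate]) (by simpa using hk))
  · exact Or.inr (Or.inl ⟨k, 2, even_two, rfl⟩)

end Words

section CycleGame

open Fin.CommRing List

variable {m : ℕ}

def walkWeights (δ : Fin m) (p : NimPos (Fin m)) : List ℕ :=
  ofFn fun i : Fin m => p.w (p.pos + δ * i) (p.pos + δ * i + δ)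

theorem walkWeights_eq_cons_cons (hm : 2 ≤ m) (δ : Fin m) (p : NimPos (Fin m)) :
    ∃ x y rest, walkWeights δ p = x :: y :: rest ∧ rest.length = m - 2 := by
  have hl : (walkWeights δ p).length = m := by simp [walkWeights]
  match walkWeights δ p, hl with
  | x :: y :: rest, hl => exact ⟨x, y, rest, rfl, by simp only [length_cons] at hl; omega⟩
  | [], hl | [_], hl => simp only [length_cons, length_nil] at hl; omega

variable [NeZero m] {p : NimPos (Fin m)} {δ : Fin m}

theorem Fin.mk_eq_zero_iff {k : ℕ} (hk : k < m) : (⟨k, hk⟩ : Fin m) = 0 ↔ k = 0 := by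
  rw [← Fin.natCast_eq_mk hk, Fin.natCast_eq_zero]
  exact ⟨fun h => Nat.eq_zero_of_dvd_of_lt h hk, fun h => h ▸ dvd_zero m⟩

theorem Fin.mk_succ_eq_add_one {k : ℕ} (hk : k + 1 < m) :
    (⟨k + 1, hk⟩ : Fin m) = ⟨k, by omega⟩ + 1 := by
  rw [← Fin.natCast_eq_mk, ← Fin.natCast_eq_mk (by omega : k < m)]
  push_cast
  rfl

theorem Fin.mk_eq_neg_one_sub {j k : ℕ} (h : j + k + 1 = m) :
    (⟨j, by omega⟩ : Fin m) = -1 - ⟨k, by omega⟩ := by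
  have h0 : ((j + k + 1 : ℕ) : Fin m) = 0 := by simp [h]
  rw [← Fin.natCast_eq_mk, ← Fin.natCast_eq_mk, eq_sub_iff_add_eq, eq_neg_iff_add_eq_zero]
  exact_mod_cast h0

theorem add_self_ne_zero_of_isUnit (hδ : IsUnit δ) (hm : 3 ≤ m) : δ + δ ≠ 0 := by
  intro h
  have h2 : δ * 2 = 0 := by linear_combination h
  rw [hδ.mul_right_eq_zero, Fin.ext_iff] at h2
  simp only [Fin.coe_ofNat_eq_mod, Nat.zero_mod] at h2
  exact absurd (Nat.le_of_dvd two_pos (Nat.dvd_of_mod_eq_zero h2)) (by omega)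

theorem isUnit_of_eq_one_or_neg_one (hδ : δ = 1 ∨ δ = -1) : IsUnit δ := by
  rcases hδ with rfl | rfl
  · exact isUnit_one
  · exact isUnit_one.neg

def IsCyclePos (p : NimPos (Fin m)) : Prop := ∀ u v, p.w u v ≠ 0 → v - u = 1 ∨ v - u = -1

theorem walkWeights_neg (δ : Fin m) (p : NimPos (Fin m)) :
    walkWeights (-δ) p = (walkWeights δ p).reverse := by
  refine ext_getElem (by simp [walkWeights]) fun k h₁ _ => ?_
  simp only [walkWeights, List.getElem_ofFn, getElem_reverse, length_ofFn] at h₁ ⊢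
  rw [Fin.mk_eq_neg_one_sub (j := m - 1 - k) (k := k) (by omega), p.symm]
  congr 1 <;> ring

theorem walkWeights_moveAlong (hδ : IsUnit δ) (hm : 3 ≤ m) (p : NimPos (Fin m)) (c : ℕ) :
    walkWeights δ (p.moveAlong (p.pos + δ) c) = (walkWeights δ p).tail ++ [c] := by
  refine ext_getElem ?_ fun k h₁ _ => ?_
  · simp only [walkWeights, length_ofFn, length_append, length_tail, length_singleton]
    omega
  simp only [walkWeights, List.getElem_ofFn, NimPos.moveAlong, getElem_append, getElem_tail,
    length_tail, length_ofFn] at h₁ ⊢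
  rcases (Nat.le_sub_one_of_lt h₁).lt_or_eq with hk | rfl
  · rw [if_neg, dif_pos hk, Fin.mk_succ_eq_add_one (by omega)]
    · congr 1 <;> ring
    rw [Sym2.eq_iff]
    rintro (⟨h, -⟩ | ⟨h, h'⟩)
    · have h0 : δ * (⟨k, by omega⟩ + 1) = 0 := by linear_combination h
      rw [hδ.mul_right_eq_zero, ← Fin.mk_succ_eq_add_one (by omega), Fin.mk_eq_zero_iff] at h0
      omega
    · exact add_self_ne_zero_of_isUnit hδ hm (by linear_combination h' - h)
  · rw [if_pos, dif_neg (lt_irrefl _)]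
    · simp
    rw [Fin.mk_eq_neg_one_sub (j := m - 1) (k := 0) (by omega), Fin.mk_zero']
    congr 1 <;> ring

theorem w_eq_of_walkWeights_eq_cons {x : ℕ} {l : List ℕ} (hw : walkWeights δ p = x :: l) :
    p.w p.pos (p.pos + δ) = x := by
  unfold walkWeights at hw
  have h := head_ofFn (hw ▸ cons_ne_nil x l)
  simp only [hw, head_cons, Fin.mk_zero', mul_zero, add_zero] at h
  exact h.symm

theorem losingWord_walkWeights_iff (hδ : δ = 1 ∨ δ = -1) :
    LosingWord (walkWeights δ p) ↔ LosingWord (walkWeights 1 p) := by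
  rcases hδ with rfl | rfl
  · rfl
  · rw [walkWeights_neg, losingWord_reverse_iff]

theorem IsCyclePos.moveAlong (hp : IsCyclePos p) (hδ : δ = 1 ∨ δ = -1) (c : ℕ) :
    IsCyclePos (p.moveAlong (p.pos + δ) c) := by
  intro u v huv
  simp only [NimPos.moveAlong] at huv
  split_ifs at huv with hpair
  · rcases Sym2.eq_iff.mp hpair with ⟨rfl, rfl⟩ | ⟨rfl, rfl⟩
    · simpa using hδ
    · rcases hδ with rfl | rfl <;> simp
  · exact hp u v huv

theorem IsCyclePos.exists_of_nimMove {q : NimPos (Fin m)} (hp : IsCyclePos p)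
    (hq : NimMove p q) :
    ∃ δ c, (δ = 1 ∨ δ = -1) ∧ c < p.w p.pos (p.pos + δ) ∧ q = p.moveAlong (p.pos + δ) c := by
  obtain ⟨δ, hδ, hpos⟩ : ∃ δ : Fin m, (δ = 1 ∨ δ = -1) ∧ q.pos = p.pos + δ :=
    ⟨q.pos - p.pos, hp _ _ (Nat.ne_zero_of_lt hq.2.1), by ring⟩
  exact ⟨δ, _, hδ, hpos ▸ hq.2.1, hpos ▸ hq.eq_moveAlong⟩

theorem IsCyclePos.exists_reply (hp : IsCyclePos p) (hm : 3 ≤ m) (hδ : δ = 1 ∨ δ = -1)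
    {x y c d : ℕ} {rest : List ℕ} (hw : walkWeights δ p = x :: y :: rest) (hd : d < y) :
    ∃ r, NimMove (p.moveAlong (p.pos + δ) c) r ∧ r.pos ≠ p.pos ∧ r.w (p.pos + δ) r.pos = d ∧
      IsCyclePos r ∧ walkWeights δ r = rest ++ [c, d] := by
  have hu := isUnit_of_eq_one_or_neg_one hδ
  set q := p.moveAlong (p.pos + δ) c
  have hwq : walkWeights δ q = y :: (rest ++ [c]) := by
    rw [walkWeights_moveAlong hu hm, hw]
    rfl
  refine ⟨q.moveAlong (q.pos + δ) d, nimMove_moveAlong ?_ (w_eq_of_walkWeights_eq_cons hwq ▸ hd),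
    ?_, q.moveAlong_w_pos _ d, (hp.moveAlong hδ c).moveAlong hδ d,
    by rw [walkWeights_moveAlong hu hm, hwq]; simp⟩
  · simpa using fun h => add_self_ne_zero_of_isUnit hu hm (by rw [h, add_zero])
  · simpa [q, add_assoc] using add_self_ne_zero_of_isUnit hu hm

theorem IsCyclePos.moverLoses (hm : 3 ≤ m) (hev : Even m) (hp : IsCyclePos p)
    (hg : LosingWord (walkWeights 1 p)) : MoverLoses p := by
  refine .of_invariant (fun p => IsCyclePos p ∧ LosingWord (walkWeights 1 p)) ?_ ⟨hp, hg⟩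
  rintro p q ⟨hp, hg⟩ hq
  obtain ⟨δ, c, hδ, hc, rfl⟩ := hp.exists_of_nimMove hq
  obtain ⟨x, y, rest, hw, hrest⟩ := walkWeights_eq_cons_cons (by omega) δ p
  rw [w_eq_of_walkWeights_eq_cons hw] at hc
  rw [← losingWord_walkWeights_iff hδ, hw] at hg
  obtain ⟨d, hd, hg'⟩ := hg.exists_reply (hrest ▸ hev.tsub even_two) hc
  obtain ⟨r, hr, -, -, hpr, hwr⟩ := hp.exists_reply hm hδ hw (c := c) hd
  exact ⟨r, hr, hpr, (losingWord_walkWeights_iff hδ).1 (hwr ▸ hg')⟩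

theorem val_add_one_mod_eq_iff {u v : Fin m} : (u.val + 1) % m = v.val ↔ u + 1 = v := by
  rw [Fin.ext_iff, Fin.val_add, Fin.val_one', Nat.add_mod_mod]

theorem isCyclePos_cycW (ω : ℕ → ℕ) (s : Fin m) :
    IsCyclePos ⟨cycW m ω, cycW_symm m ω, s⟩ := by
  intro u v huv
  by_cases h₁ : u + 1 = v
  · left; rw [← h₁]; ring
  by_cases h₂ : v + 1 = u
  · right; rw [← h₂]; ring
  simp [cycW, val_add_one_mod_eq_iff, h₁, h₂] at huv

theorem cycW_add_one (hm : 3 ≤ m) (ω : ℕ → ℕ) (u : Fin m) : cycW m ω u (u + 1) = ω u.val := by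
  have h : u + 1 + 1 ≠ u := by
    simpa [add_assoc] using add_self_ne_zero_of_isUnit (isUnit_one (M := Fin m)) hm
  simp [cycW, val_add_one_mod_eq_iff, h]

theorem walkWeights_cycW_const (hm : 3 ≤ m) (hδ : δ = 1 ∨ δ = -1) (k : ℕ) (s : Fin m) :
    walkWeights δ ⟨cycW m (fun _ => k), cycW_symm m _, s⟩ = replicate m k := by
  refine eq_replicate_iff.2 ⟨by simp [walkWeights], fun b hb => ?_⟩
  obtain ⟨i, rfl⟩ := mem_ofFn.1 hb
  rcases hδ with rfl | rfl
  · exact cycW_add_one hm (fun _ => k) (s + 1 * i)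
  · change cycW m (fun _ => k) (s + -1 * i) (s + -1 * i + -1) = k
    rw [cycW_symm]
    convert cycW_add_one hm (fun _ => k) (s + -1 * i + -1) using 2
    ring

theorem exists_moverLoses_reply_cycW_two (hm : 3 ≤ m) (hev : Even m) (s : Fin m)
    {q : NimPos (Fin m)} (hq : NimMove ⟨cycW m (fun _ => 2), cycW_symm m _, s⟩ q)
    (hc : q.w s q.pos ≤ 1) :
    ∃ r, NimMove q r ∧ r.pos ≠ s ∧ r.w q.pos r.pos = q.w s q.pos ∧ MoverLoses r := by
  have hp := isCyclePos_cycW (fun _ => 2) s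
  obtain ⟨δ, c, hδ, -, rfl⟩ := hp.exists_of_nimMove hq
  have hw : walkWeights δ ⟨cycW m (fun _ => 2), cycW_symm m _, s⟩ =
      2 :: 2 :: replicate (m - 2) 2 := by
    rw [walkWeights_cycW_const hm hδ, ← replicate_succ, ← replicate_succ]
    congr 1
    omega
  simp only [NimPos.moveAlong_pos] at hc ⊢
  rw [NimPos.moveAlong_w_pos] at hc ⊢
  obtain ⟨r, hr, hne, hrw, hpr, hwr⟩ := hp.exists_reply hm hδ hw (show c < 2 by omega)
  refine ⟨r, hr, hne, hrw, hpr.moverLoses hm hev ?_⟩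
  rw [← losingWord_walkWeights_iff hδ, hwr]
  exact losingWord_replicate_two_append (hev.tsub even_two) hc

end CycleGame

/-- Nim on the even cycle `C_{2n}` with every edge of weight 2:
the second player wins; whenever the first player reduces an incident edge to
weight 1 and crosses it, continuing forward around the cycle reducing the next
edge to weight 1 is a winning reply for the second player; and reducing an
edge to 0 on the first move loses for the first player (it leaves the second
player at the endpoint of an odd-length path, a p-position). -/
theorem stmt17 (n : ℕ) (hn : 2 ≤ n) (s : Fin (2*n)) :
    MoverLoses ⟨cycW (2*n) (fun _ => 2), cycW_symm (2*n) (fun _ => 2), s⟩ ∧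
    (∀ q, NimMove ⟨cycW (2*n) (fun _ => 2), cycW_symm (2*n) (fun _ => 2), s⟩ q →
      q.w s q.pos = 1 →
      ∃ r, NimMove q r ∧ r.pos ≠ s ∧ r.w q.pos r.pos = 1 ∧ MoverLoses r) ∧
    (∀ q, NimMove ⟨cycW (2*n) (fun _ => 2), cycW_symm (2*n) (fun _ => 2), s⟩ q →
      q.w s q.pos = 0 → MoverWins q) := by
  have : NeZero (2*n) := ⟨by omega⟩
  have hm : 3 ≤ 2*n := by omega
  have hev : Even (2*n) := even_two_mul n
  refine ⟨(isCyclePos_cycW _ s).moverLoses hm hev ?_, fun q hq h1 => ?_, fun q hq h0 => ?_⟩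
  · rw [walkWeights_cycW_const hm (.inl rfl)]
    exact Or.inr (Or.inl ⟨2*n, 0, Even.zero, by simp⟩)
  · obtain ⟨r, hr, hne, hrw, hl⟩ := exists_moverLoses_reply_cycW_two hm hev s hq h1.le
    exact ⟨r, hr, hne, hrw.trans h1, hl⟩
  · obtain ⟨r, hr, -, -, hl⟩ := exists_moverLoses_reply_cycW_two hm hev s hq (by omega)
    exact ⟨r, hr, hl⟩
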